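/- arXiv:1010.1584 — 4 statements merged into one kernel-verified Lean document; each statement's English description precedes it below -/
import Mathlib

section
/- Let f and f₁ be continuous, strictly increasing functions from [0,1] to [0,∞) with f(0) = f₁(0) = 0, such that f₁ is convex on some interval [0,δ] with δ > 0, and f(x)/f₁(x) → 1 as x → 0⁺. For ε > 0 define f*(ε) = sup{x ∈ [0,1] : f(x) < ε} and f₁*(ε) = sup{x ∈ [0,1] : f₁(x) < ε}. Then f*(ε)/f₁*(ε) → 1 as ε → 0⁺. -/
open Set Filter Topology

private lemma inv_spec (f : ℝ → ℝ) (hc : ContinuousOn f (Icc 0 1))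
    (hm : StrictMonoOn f (Icc 0 1)) (h0 : f 0 = 0)
    {ε : ℝ} (hε : 0 < ε) (hε1 : ε ≤ f 1) :
    ∃ x, x ∈ Ioc (0:ℝ) 1 ∧ f x = ε ∧ sSup {y ∈ Icc (0:ℝ) 1 | f y < ε} = x := by
  obtain ⟨x, hx, hfx⟩ := intermediate_value_Icc (by norm_num : (0:ℝ) ≤ 1) hc
    (show ε ∈ Icc (f 0) (f 1) from ⟨by rw [h0]; exact hε.le, hε1⟩)
  have hx0 : 0 < x := by
    rcases lt_or_eq_of_le hx.1 with h | h
    · exact h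
    · exfalso; rw [← h, h0] at hfx; linarith
  refine ⟨x, ⟨hx0, hx.2⟩, hfx, ?_⟩
  have h0mem : (0:ℝ) ∈ {y ∈ Icc (0:ℝ) 1 | f y < ε} :=
    ⟨⟨le_refl 0, by norm_num⟩, by rw [h0]; exact hε⟩
  have hne : ({y ∈ Icc (0:ℝ) 1 | f y < ε}).Nonempty := ⟨0, h0mem⟩
  have hbdd : BddAbove {y ∈ Icc (0:ℝ) 1 | f y < ε} := ⟨1, fun y hy => hy.1.2⟩
  apply le_antisymm
  · apply csSup_le hne
    intro y hy
    by_contra h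
    push_neg at h
    exact absurd (hm hx hy.1 h) (by linarith [hy.2, hfx])
  · by_contra h
    push_neg at h
    set s := sSup {y ∈ Icc (0:ℝ) 1 | f y < ε} with hs
    have hs0 : 0 ≤ s := le_csSup hbdd h0mem
    have hz1 : s < (s + x) / 2 := by linarith
    have hz2 : (s + x) / 2 < x := by linarith
    have hzmem : (s + x) / 2 ∈ Icc (0:ℝ) 1 := ⟨by linarith, by linarith [hx.2]⟩
    have : (s + x) / 2 ∈ {y ∈ Icc (0:ℝ) 1 | f y < ε} :=
      ⟨hzmem, by rw [← hfx]; exact hm hzmem hx hz2⟩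
    exact absurd (le_csSup hbdd this) (not_le.mpr hz1)


set_option maxHeartbeats 1600000 in
/-- Asymptotic inversion lemma (Lemma 5): if `f ~ f₁` as `x → 0⁺`, with both continuous,
strictly increasing, vanishing at `0`, nonnegative, and `f₁` convex near `0`, then the
generalized inverses `ε ↦ sup {x : f x < ε}` are also asymptotically equivalent. -/
theorem asymptotic_inversion (f f₁ : ℝ → ℝ)
    (hfc : ContinuousOn f (Icc 0 1)) (hf₁c : ContinuousOn f₁ (Icc 0 1))
    (hfm : StrictMonoOn f (Icc 0 1)) (hf₁m : StrictMonoOn f₁ (Icc 0 1))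
    (hf0 : f 0 = 0) (hf₁0 : f₁ 0 = 0)
    (hfnn : ∀ x ∈ Icc (0:ℝ) 1, 0 ≤ f x) (hf₁nn : ∀ x ∈ Icc (0:ℝ) 1, 0 ≤ f₁ x)
    (hconv : ∃ δ > (0:ℝ), ConvexOn ℝ (Icc 0 δ) f₁)
    (hlim : Tendsto (fun x => f x / f₁ x) (𝓝[>] 0) (𝓝 1)) :
    Tendsto (fun ε => sSup {x ∈ Icc (0:ℝ) 1 | f x < ε} /
        sSup {x ∈ Icc (0:ℝ) 1 | f₁ x < ε}) (𝓝[>] 0) (𝓝 1) := by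
  obtain ⟨δ, hδ0, hconvδ⟩ := hconv
  rw [Metric.tendsto_nhdsWithin_nhds]
  intro τ hτ
  set η := min (1/2 : ℝ) (τ/3) with hηdef
  have hη0 : 0 < η := lt_min (by norm_num) (by linarith)
  have hηh : η ≤ 1/2 := min_le_left _ _
  have hητ : η ≤ τ/3 := min_le_right _ _
  -- get x₀ from hlim
  obtain ⟨d, hd0, hdp⟩ := Metric.tendsto_nhdsWithin_nhds.mp hlim η hη0
  set x₀ := min (min (d/2) δ) 1 with hx₀def
  have hx₀0 : 0 < x₀ := lt_min (lt_min (by linarith) hδ0) one_pos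
  have hx₀d : x₀ < d := lt_of_le_of_lt (le_trans (min_le_left _ _) (min_le_left _ _)) (by linarith)
  have hx₀δ : x₀ ≤ δ := le_trans (min_le_left _ _) (min_le_right _ _)
  have hx₀1 : x₀ ≤ 1 := min_le_right _ _
  have hx₀mem : x₀ ∈ Icc (0:ℝ) 1 := ⟨hx₀0.le, hx₀1⟩
  -- f₁ positive on (0,1]
  have hf₁pos : ∀ x, 0 < x → x ≤ 1 → 0 < f₁ x := fun x h1 h2 => by
    have := hf₁m (show (0:ℝ) ∈ Icc (0:ℝ) 1 by constructor <;> norm_num) ⟨h1.le, h2⟩ h1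
    rwa [hf₁0] at this
  have hfpos : ∀ x, 0 < x → x ≤ 1 → 0 < f x := fun x h1 h2 => by
    have := hfm (show (0:ℝ) ∈ Icc (0:ℝ) 1 by constructor <;> norm_num) ⟨h1.le, h2⟩ h1
    rwa [hf0] at this
  -- ratio bound on (0, x₀]
  have hratio : ∀ x, 0 < x → x ≤ x₀ →
      (1-η) * f₁ x ≤ f x ∧ f x ≤ (1+η) * f₁ x := by
    intro x h1 h2
    have hx1 : x ≤ 1 := le_trans h2 hx₀1
    have hfx₁ : 0 < f₁ x := hf₁pos x h1 hx1
    have hdist : dist x 0 < d := by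
      rw [Real.dist_eq, sub_zero, abs_of_pos h1]; linarith
    have := hdp h1 hdist
    rw [Real.dist_eq] at this
    have h3 := abs_lt.mp this
    constructor
    · have : (1-η) < f x / f₁ x := by linarith [h3.1]
      calc (1-η) * f₁ x ≤ (f x / f₁ x) * f₁ x := by nlinarith
        _ = f x := by field_simp
    · have : f x / f₁ x < 1 + η := by linarith [h3.2]
      calc f x = (f x / f₁ x) * f₁ x := by field_simp
        _ ≤ (1+η) * f₁ x := by nlinarith
  -- convexity consequence
  have hcvx : ∀ t, 0 ≤ t → t ≤ 1 → ∀ y, 0 ≤ y → y ≤ δ → f₁ (t * y) ≤ t * f₁ y := by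
    intro t ht0 ht1 y hy0 hyδ
    have := hconvδ.2 (show (0:ℝ) ∈ Icc 0 δ from ⟨le_refl 0, hδ0.le⟩)
      (show y ∈ Icc 0 δ from ⟨hy0, hyδ⟩)
      (show (0:ℝ) ≤ 1 - t by linarith) ht0 (by ring)
    simpa [hf₁0, smul_eq_mul] using this
  -- choose ε₀
  have hfx₀ : 0 < f x₀ := hfpos x₀ hx₀0 hx₀1
  have hf₁x₀ : 0 < f₁ x₀ := hf₁pos x₀ hx₀0 hx₀1
  refine ⟨min (f x₀) ((1-η) * f₁ x₀), lt_min hfx₀ (by nlinarith), ?_⟩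
  intro ε hεpos hεd
  have hεp : (0:ℝ) < ε := hεpos
  have hεlt : ε < min (f x₀) ((1-η) * f₁ x₀) := by
    rwa [Real.dist_eq, sub_zero, abs_of_pos hεpos] at hεd
  have hε1 : ε < f x₀ := lt_of_lt_of_le hεlt (min_le_left _ _)
  have hε2 : ε < (1-η) * f₁ x₀ := lt_of_lt_of_le hεlt (min_le_right _ _)
  have hε3 : ε < f₁ x₀ := by nlinarith
  have hfmono : f x₀ ≤ f 1 := hfm.monotoneOn hx₀mem (by constructor <;> norm_num) hx₀1
  have hf₁mono : f₁ x₀ ≤ f₁ 1 := hf₁m.monotoneOn hx₀mem (by constructor <;> norm_num) hx₀1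
  -- a = f*(ε)
  obtain ⟨a, ha, hfa, hSa⟩ := inv_spec f hfc hfm hf0 hεpos (by linarith)
  -- b = f₁*(ε)
  obtain ⟨b, hb, hf₁b, hSb⟩ := inv_spec f₁ hf₁c hf₁m hf₁0 hεpos (by linarith)
  -- w = f₁*(ε/(1-η))
  have hε'pos : 0 < ε / (1-η) := div_pos hεpos (by linarith)
  have hε'lt : ε / (1-η) < f₁ x₀ := by rw [div_lt_iff₀ (by linarith : (0:ℝ) < 1-η)]; nlinarith
  obtain ⟨w, hw, hf₁w, _⟩ := inv_spec f₁ hf₁c hf₁m hf₁0 hε'pos (by linarith)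
  -- v = f₁*(ε/(1+η))
  have hε''pos : 0 < ε / (1+η) := div_pos hεpos (by linarith)
  have hε''le : ε / (1+η) ≤ ε := by rw [div_le_iff₀ (by linarith : (0:ℝ) < 1+η)]; nlinarith [hεp, hη0]
  obtain ⟨v, hv, hf₁v, _⟩ := inv_spec f₁ hf₁c hf₁m hf₁0 hε''pos (by linarith)
  -- a, b, w < x₀
  have hax₀ : a < x₀ := by
    by_contra h
    push_neg at h
    exact absurd (hfm.monotoneOn hx₀mem ⟨ha.1.le, ha.2⟩ h) (by rw [hfa]; linarith)
  have hbx₀ : b < x₀ := by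
    by_contra h
    push_neg at h
    exact absurd (hf₁m.monotoneOn hx₀mem ⟨hb.1.le, hb.2⟩ h) (by rw [hf₁b]; linarith)
  have hwx₀ : w < x₀ := by
    by_contra h
    push_neg at h
    exact absurd (hf₁m.monotoneOn hx₀mem ⟨hw.1.le, hw.2⟩ h) (by rw [hf₁w]; linarith)
  -- ratio bound at a
  obtain ⟨hal, hau⟩ := hratio a ha.1 hax₀.le
  rw [hfa] at hal hau
  -- upper bound: (1-η)*a ≤ b
  have haw : a ≤ w := by
    have h1 : f₁ a ≤ f₁ w := by
      rw [hf₁w, le_div_iff₀ (by linarith : (0:ℝ) < 1-η)]; linarith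
    exact (hf₁m.le_iff_le ⟨ha.1.le, ha.2⟩ ⟨hw.1.le, hw.2⟩).mp h1
  have hwb : (1-η) * w ≤ b := by
    have hconv1 : f₁ ((1-η) * w) ≤ (1-η) * f₁ w :=
      hcvx (1-η) (by linarith) (by linarith) w hw.1.le (by linarith)
    have h1 : f₁ ((1-η) * w) ≤ f₁ b := by
      rw [hf₁b]
      calc f₁ ((1-η) * w) ≤ (1-η) * f₁ w := hconv1
        _ = ε := by rw [hf₁w, mul_comm, div_mul_cancel₀ ε (ne_of_gt (by linarith : (0:ℝ) < 1-η))]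
    have hmem1 : (1-η) * w ∈ Icc (0:ℝ) 1 :=
      ⟨by nlinarith [hw.1.le], by nlinarith [hw.2, hw.1.le]⟩
    exact (hf₁m.le_iff_le hmem1 ⟨hb.1.le, hb.2⟩).mp h1
  have hub : (1-η) * a ≤ b := le_trans (by nlinarith) hwb
  -- lower bound: b ≤ (1+η)*a
  have hva : v ≤ a := by
    have h1 : f₁ v ≤ f₁ a := by
      rw [hf₁v, div_le_iff₀ (by linarith : (0:ℝ) < 1+η)]; nlinarith
    exact (hf₁m.le_iff_le ⟨hv.1.le, hv.2⟩ ⟨ha.1.le, ha.2⟩).mp h1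
  have hbv : b / (1+η) ≤ v := by
    have hconv1 : f₁ ((1/(1+η)) * b) ≤ (1/(1+η)) * f₁ b := by
      apply hcvx (1/(1+η)) (by positivity)
        (by rw [div_le_one (by linarith : (0:ℝ) < 1+η)]; linarith)
        b hb.1.le (by linarith)
    have h1 : f₁ (b / (1+η)) ≤ f₁ v := by
      rw [hf₁v]
      have heq : (1/(1+η)) * b = b / (1+η) := by ring
      rw [heq] at hconv1
      calc f₁ (b / (1+η)) ≤ (1/(1+η)) * f₁ b := hconv1
        _ = ε / (1+η) := by rw [hf₁b]; ring
    have hmem1 : b / (1+η) ∈ Icc (0:ℝ) 1 := by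
      constructor
      · exact div_nonneg hb.1.le (by linarith)
      · rw [div_le_one (by linarith : (0:ℝ) < 1+η)]; nlinarith [hb.2, hb.1.le]
    exact (hf₁m.le_iff_le hmem1 ⟨hv.1.le, hv.2⟩).mp h1
  have hlb : b ≤ (1+η) * a := by
    have := le_trans hbv hva
    rw [div_le_iff₀ (by linarith : (0:ℝ) < 1+η)] at this
    linarith
  -- conclude
  rw [hSa, hSb, Real.dist_eq]
  have hbpos : 0 < b := hb.1
  have hr1 : a / b ≤ 1 / (1-η) := by
    rw [div_le_div_iff₀ hbpos (by linarith : (0:ℝ) < 1-η)]; nlinarith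
  have hr2 : 1 / (1+η) ≤ a / b := by
    rw [div_le_div_iff₀ (by linarith : (0:ℝ) < 1+η) hbpos]; nlinarith
  have h1 : 1 / (1-η) ≤ 1 + 2*η := by
    rw [div_le_iff₀ (by linarith : (0:ℝ) < 1-η)]; nlinarith
  have h2 : 1 - 2*η ≤ 1 / (1+η) := by
    rw [le_div_iff₀ (by linarith : (0:ℝ) < 1+η)]; nlinarith
  have : |a / b - 1| ≤ 2*η := abs_le.mpr ⟨by linarith, by linarith⟩
  linarith
end

section
/- Let α > 2, θ > 0, R > 0, and let m > 2/α be a real number. Let W and H be independent random variables, each distributed according to the gamma distribution with shape m and rate m (i.e., with density m^m x^{m−1} e^{−mx}/Γ(m) on (0,∞)). Then ∫_{ℝ²} ℙ( W·‖x‖^α ≤ H·θ·R^α ) dx = π θ^{2/α} R² · Γ(m − 2/α) Γ(m + 2/α) / Γ(m)². -/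
open MeasureTheory ProbabilityTheory Real Set

/-!
Swap the two integrals (Tonelli). For fixed fading values `W = w`, `H = h` the interferer
positions that cause outage form the disc of radius `(h θ R^α / w)^(1/α)`, whose area is
`π (θ R^α)^(2/α) h^(2/α) w^(-2/α)`. By independence the expected area factors into the gamma
moments `E[H^(2/α)] = Γ(m + 2/α) / (Γ(m) m^(2/α))` and `E[W^(-2/α)] = Γ(m - 2/α) / (Γ(m) m^(-2/α))`,
the latter finite precisely because `m > 2/α`.
-/

namespace ProbabilityTheory

lemma gammaMeasure_Iic_zero (a r : ℝ) : gammaMeasure a r (Iic 0) = 0 := by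
  rw [gammaMeasure, withDensity_apply _ measurableSet_Iic,
    setLIntegral_congr Iio_ae_eq_Iic.symm, lintegral_gammaPDF_of_nonpos le_rfl]

lemma ae_pos_gammaMeasure (a r : ℝ) : ∀ᵐ x ∂gammaMeasure a r, 0 < x :=
  measure_mono_null (fun x (hx : ¬0 < x) => not_lt.1 hx) (gammaMeasure_Iic_zero a r)

lemma measurable_gammaPDF (a r : ℝ) : Measurable (gammaPDF a r) :=
  (measurable_gammaPDFReal a r).ennreal_ofReal

lemma lintegral_rpow_gammaMeasure {a r p : ℝ} (ha : 0 < a) (hr : 0 < r) (hap : 0 < a + p) :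
    ∫⁻ x, ENNReal.ofReal (x ^ p) ∂gammaMeasure a r =
      ENNReal.ofReal (Gamma (a + p) / (Gamma a * r ^ p)) := by
  have hpow : Measurable fun x : ℝ => ENNReal.ofReal (x ^ p) :=
    (measurable_id.pow_const p).ennreal_ofReal
  have hsupport : Function.support (fun x => gammaPDF a r x * ENNReal.ofReal (x ^ p)) ⊆ Ici 0 :=
    Function.support_subset_iff'.2 fun x hx => by
      rw [gammaPDF_of_neg (not_le.1 hx), zero_mul]
  have hdensity : ∀ x ∈ Ioi (0 : ℝ), gammaPDF a r x * ENNReal.ofReal (x ^ p) =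
      ENNReal.ofReal (r ^ a / Gamma a * (x ^ (a + p - 1) * exp (-(r * x)))) := by
    intro x (hx : 0 < x)
    rw [gammaPDF_of_nonneg hx.le, ← ENNReal.ofReal_mul (by positivity),
      show a + p - 1 = (a - 1) + p by ring, rpow_add hx]
    ring_nf
  have hint : IntegrableOn (fun x : ℝ => x ^ (a + p - 1) * exp (-(r * x))) (Ioi 0) := by
    simpa only [rpow_one, neg_mul] using
      integrableOn_rpow_mul_exp_neg_mul_rpow (by linarith : -1 < a + p - 1) zero_lt_one hr
  calc ∫⁻ x, ENNReal.ofReal (x ^ p) ∂gammaMeasure a r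
      = ∫⁻ x in Ioi 0, gammaPDF a r x * ENNReal.ofReal (x ^ p) := by
        rw [gammaMeasure, lintegral_withDensity_eq_lintegral_mul _ (measurable_gammaPDF a r) hpow,
          setLIntegral_congr Ioi_ae_eq_Ici, setLIntegral_eq_of_support_subset hsupport]
        rfl
    _ = ∫⁻ x in Ioi 0, ENNReal.ofReal (r ^ a / Gamma a * (x ^ (a + p - 1) * exp (-(r * x)))) :=
        setLIntegral_congr_fun measurableSet_Ioi hdensity
    _ = ENNReal.ofReal (r ^ a / Gamma a * ∫ x in Ioi 0, x ^ (a + p - 1) * exp (-(r * x))) := by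
        rw [← integral_const_mul, ofReal_integral_eq_lintegral_ofReal (hint.const_mul _)]
        exact (ae_restrict_iff' measurableSet_Ioi).2 (ae_of_all _ fun x (hx : 0 < x) => by
          positivity)
    _ = ENNReal.ofReal (Gamma (a + p) / (Gamma a * r ^ p)) := by
        rw [integral_rpow_mul_exp_neg_mul_Ioi hap hr, one_div, inv_rpow hr.le, rpow_add hr]
        have := Gamma_pos_of_pos ha
        have := rpow_pos_of_pos hr p
        have := rpow_pos_of_pos hr a
        field_simp

lemma lintegral_rpow_mul_rpow_of_indepFun {Ω : Type*} [MeasurableSpace Ω] {μ : Measure Ω}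
    {X Y : Ω → ℝ} (hX : Measurable X) (hY : Measurable Y) (hXY : IndepFun X Y μ) (p s : ℝ) :
    ∫⁻ ω, ENNReal.ofReal (X ω ^ p) * ENNReal.ofReal (Y ω ^ s) ∂μ =
      (∫⁻ x, ENNReal.ofReal (x ^ p) ∂μ.map X) * ∫⁻ y, ENNReal.ofReal (y ^ s) ∂μ.map Y := by
  have hpow (q : ℝ) : Measurable fun x : ℝ => ENNReal.ofReal (x ^ q) :=
    (measurable_id.pow_const q).ennreal_ofReal
  rw [lintegral_map (hpow p) hX, lintegral_map (hpow s) hY]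
  exact lintegral_mul_eq_lintegral_mul_lintegral_of_indepFun'' ((hpow p).comp hX).aemeasurable
    ((hpow s).comp hY).aemeasurable (hXY.comp (hpow p) (hpow s))

end ProbabilityTheory

namespace MeasureTheory

lemma integral_toReal_measure_prodMk_preimage {α β : Type*} [MeasurableSpace α]
    [MeasurableSpace β] {ν : Measure α} {μ : Measure β} [SFinite ν] [IsFiniteMeasure μ]
    {s : Set (α × β)} (hs : MeasurableSet s) :
    ∫ x, (μ (Prod.mk x ⁻¹' s)).toReal ∂ν = (∫⁻ y, ν ((fun x => (x, y)) ⁻¹' s) ∂μ).toReal := by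
  rw [integral_toReal (measurable_measure_prodMk_left hs).aemeasurable
    (ae_of_all _ fun x => measure_lt_top μ _), ← Measure.prod_apply hs,
    Measure.prod_apply_symm hs]

end MeasureTheory

lemma EuclideanSpace.volume_norm_rpow_le_fin_two {α t : ℝ} (hα : 0 < α) (ht : 0 ≤ t) :
    volume {x : EuclideanSpace ℝ (Fin 2) | ‖x‖ ^ α ≤ t} = ENNReal.ofReal (π * t ^ (2 / α)) := by
  have hball : {x : EuclideanSpace ℝ (Fin 2) | ‖x‖ ^ α ≤ t} = Metric.closedBall 0 (t ^ α⁻¹) := by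
    ext x
    simp only [mem_ofPred_eq, Metric.mem_closedBall, dist_zero_right]
    exact (le_rpow_inv_iff_of_pos (norm_nonneg x) ht hα).symm
  rw [hball, EuclideanSpace.volume_closedBall_fin_two, ← ENNReal.ofReal_pow (by positivity),
    ← ENNReal.ofReal_mul (by positivity), ← rpow_natCast, ← rpow_mul ht, mul_comm]
  congr 3
  push_cast
  ring

lemma EuclideanSpace.volume_mul_norm_rpow_le_mul_fin_two {α w h c : ℝ} (hα : 0 < α) (hw : 0 < w)
    (hh : 0 ≤ h) (hc : 0 ≤ c) :
    volume {x : EuclideanSpace ℝ (Fin 2) | w * ‖x‖ ^ α ≤ h * c} =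
      ENNReal.ofReal (π * c ^ (2 / α)) *
        (ENNReal.ofReal (h ^ (2 / α)) * ENNReal.ofReal (w ^ (-(2 / α)))) := by
  have hset : {x : EuclideanSpace ℝ (Fin 2) | w * ‖x‖ ^ α ≤ h * c} =
      {x | ‖x‖ ^ α ≤ h * c / w} := by
    simp only [le_div_iff₀ hw, mul_comm w]
  rw [hset, volume_norm_rpow_le_fin_two hα (by positivity), div_rpow (by positivity) hw.le,
    mul_rpow hh hc, rpow_neg hw.le, ← ENNReal.ofReal_mul (by positivity),
    ← ENNReal.ofReal_mul (by positivity)]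
  congr 1
  ring

/-- Spatial contention parameter for Poisson ALOHA with Nakagami-m fading (equation (14)):
if `W` and `H` are independent Gamma(m, m) random variables, then
`∫_{ℝ²} ℙ(W ‖x‖^α ≤ H θ R^α) dx = π θ^(2/α) R² Γ(m - 2/α) Γ(m + 2/α) / Γ(m)²`. -/
theorem gamma_aloha_nakagami (α θ R m : ℝ) (hα : 2 < α) (hθ : 0 < θ) (hR : 0 < R)
    (hm : 2 / α < m)
    {Ω : Type*} [MeasurableSpace Ω] (μ : Measure Ω) [IsProbabilityMeasure μ]
    (W H : Ω → ℝ) (hWmeas : Measurable W) (hHmeas : Measurable H)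
    (hindep : IndepFun W H μ)
    (hW : Measure.map W μ = gammaMeasure m m)
    (hH : Measure.map H μ = gammaMeasure m m) :
    ∫ x : EuclideanSpace ℝ (Fin 2),
        (μ {ω | W ω * ‖x‖ ^ α ≤ H ω * (θ * R ^ α)}).toReal
      = π * θ ^ (2 / α) * R ^ 2 * (Gamma (m - 2 / α) * Gamma (m + 2 / α)) / Gamma m ^ 2 := by
  have hα0 : 0 < α := by linarith
  set q := 2 / α
  have hm0 : 0 < m := (by positivity : 0 < q).trans hm
  set c := θ * R ^ α
  have hcq : c ^ q = θ ^ q * R ^ 2 := by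
    rw [mul_rpow hθ.le (by positivity), ← rpow_mul hR.le, mul_div_cancel₀ _ hα0.ne', rpow_two]
  set S := {p : EuclideanSpace ℝ (Fin 2) × Ω | W p.2 * ‖p.1‖ ^ α ≤ H p.2 * c}
  have hS : MeasurableSet S := measurableSet_le (by fun_prop) (by fun_prop)
  have hslice : ∀ᵐ ω ∂μ, volume ((fun x => (x, ω)) ⁻¹' S) =
      ENNReal.ofReal (π * c ^ q) * (ENNReal.ofReal (H ω ^ q) * ENNReal.ofReal (W ω ^ (-q))) := by
    filter_upwards [ae_of_ae_map hWmeas.aemeasurable (hW ▸ ae_pos_gammaMeasure m m),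
      ae_of_ae_map hHmeas.aemeasurable (hH ▸ ae_pos_gammaMeasure m m)] with ω hw hh
    exact EuclideanSpace.volume_mul_norm_rpow_le_mul_fin_two hα0 hw hh.le (by positivity)
  have hmoment (p : ℝ) (hp : 0 < m + p) := lintegral_rpow_gammaMeasure hm0 hm0 hp
  calc ∫ x : EuclideanSpace ℝ (Fin 2), (μ {ω | W ω * ‖x‖ ^ α ≤ H ω * c}).toReal
      = (∫⁻ ω, volume ((fun x => (x, ω)) ⁻¹' S) ∂μ).toReal :=
        integral_toReal_measure_prodMk_preimage hS
    _ = (ENNReal.ofReal (π * c ^ q) * (ENNReal.ofReal (Gamma (m + q) / (Gamma m * m ^ q)) *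
          ENNReal.ofReal (Gamma (m + -q) / (Gamma m * m ^ (-q))))).toReal := by
        rw [lintegral_congr_ae hslice, lintegral_const_mul _ (by fun_prop),
          lintegral_rpow_mul_rpow_of_indepFun hHmeas hWmeas hindep.symm, hH, hW,
          hmoment q (by positivity), hmoment (-q) (by linarith)]
    _ = π * θ ^ q * R ^ 2 * (Gamma (m - q) * Gamma (m + q)) / Gamma m ^ 2 := by
        have := Gamma_pos_of_pos hm0
        have := Gamma_pos_of_pos (by linarith : 0 < m - q)
        have := rpow_pos_of_pos hm0 q
        rw [← sub_eq_add_neg, rpow_neg hm0.le, hcq, ENNReal.toReal_mul, ENNReal.toReal_mul,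
          ENNReal.toReal_ofReal (by positivity), ENNReal.toReal_ofReal (by positivity),
          ENNReal.toReal_ofReal (by positivity)]
        field_simp
end

section
/- For every real α > 2, θ > 0, and R > 0, ∫_{ℝ²} θ R^α / (θ R^α + ‖x‖^α) dx = π θ^{2/α} R² Γ(1 − 2/α) Γ(1 + 2/α). -/
/-!
In polar coordinates the integral is `2π ∫₀^∞ r · c / (c + r^α) dr` with `c = θ R^α`.
Writing `c / (c + t) = ∫₀^∞ c e^{-cu} e^{-ut} du` and exchanging the integrals, the integral over `r`
is a Gamma integral `u^{-2/α} Γ(2/α) / α`, and the remaining integral over `u` is again a Gamma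
integral, equal to `c^{2/α} Γ(1 - 2/α)`. Finally `c^{2/α} = θ^{2/α} R²` and
`(2/α) Γ(2/α) = Γ(1 + 2/α)`.
-/

open MeasureTheory Real Set Function

lemma integral_exp_neg_mul_Ioi_zero {a : ℝ} (ha : 0 < a) :
    ∫ u in Ioi (0 : ℝ), rexp (-(a * u)) = a⁻¹ := by
  have h := integral_exp_mul_Ioi (neg_lt_zero.mpr ha) 0
  simp only [neg_mul, mul_zero, exp_zero] at h
  rw [h]
  ring

lemma div_add_eq_integral_exp {c t : ℝ} (h : 0 < c + t) :
    c / (c + t) = ∫ u in Ioi (0 : ℝ), c * rexp (-(c * u)) * rexp (-u * t) := by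
  have hexp : ∀ u, c * rexp (-(c * u)) * rexp (-u * t) = c * rexp (-((c + t) * u)) := fun u => by
    rw [mul_assoc, ← Real.exp_add]
    ring_nf
  simp_rw [hexp, integral_const_mul, integral_exp_neg_mul_Ioi_zero h, div_eq_mul_inv]

section

variable {c p q : ℝ}

lemma integrable_exp_mul_rpow_mul_exp_neg_mul_rpow (hc : 0 < c) (hq : -1 < q) (hqp : q + 1 < p) :
    Integrable (uncurry fun u y : ℝ => c * rexp (-(c * u)) * (y ^ q * rexp (-u * y ^ p)))
      ((volume.restrict (Ioi 0)).prod (volume.restrict (Ioi 0))) := by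
  have hp : 0 < p := by linarith
  have hmeas : Measurable
      (uncurry fun u y : ℝ => c * rexp (-(c * u)) * (y ^ q * rexp (-u * y ^ p))) := by
    fun_prop
  rw [integrable_prod_iff hmeas.aestronglyMeasurable]
  refine ⟨(ae_restrict_mem measurableSet_Ioi).mono fun u (hu : 0 < u) => ?_, ?_⟩
  · exact (integrableOn_rpow_mul_exp_neg_mul_rpow hq hp hu).const_mul (c * rexp (-(c * u)))
  · have hs : -1 < -(q + 1) / p := by rw [neg_div, neg_lt_neg_iff, div_lt_one hp]; exact hqp
    have hint : IntegrableOn (fun u : ℝ => c * (1 / p) * Gamma ((q + 1) / p) *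
        (u ^ (-(q + 1) / p) * rexp (-c * u ^ (1 : ℝ)))) (Ioi 0) :=
      (integrableOn_rpow_mul_exp_neg_mul_rpow hs one_pos hc).const_mul _
    refine hint.congr_fun (fun u (hu : 0 < u) => ?_) measurableSet_Ioi
    have hnorm : ∫ y in Ioi (0 : ℝ), ‖c * rexp (-(c * u)) * (y ^ q * rexp (-u * y ^ p))‖
        = ∫ y in Ioi (0 : ℝ), c * rexp (-(c * u)) * (y ^ q * rexp (-u * y ^ p)) :=
      setIntegral_congr_fun measurableSet_Ioi fun y (hy : 0 < y) =>
        Real.norm_of_nonneg (by positivity)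
    simp only [uncurry_apply_pair]
    rw [hnorm, integral_const_mul, integral_rpow_mul_exp_neg_mul_rpow hp hq hu, rpow_one,
      neg_mul c u]
    ring

lemma integral_rpow_mul_div_add_rpow (hc : 0 < c) (hq : -1 < q) (hqp : q + 1 < p) :
    ∫ y in Ioi (0 : ℝ), y ^ q * (c / (c + y ^ p))
      = c ^ ((q + 1) / p) * (1 / p) * Gamma ((q + 1) / p) * Gamma (1 - (q + 1) / p) := by
  have hp : 0 < p := by linarith
  set s := (q + 1) / p with hs
  have hs0 : 0 < s := div_pos (by linarith) hp
  have hs1 : s < 1 := by rw [hs, div_lt_one hp]; exact hqp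
  calc ∫ y in Ioi (0 : ℝ), y ^ q * (c / (c + y ^ p))
      = ∫ y in Ioi (0 : ℝ), ∫ u in Ioi (0 : ℝ),
          c * rexp (-(c * u)) * (y ^ q * rexp (-u * y ^ p)) := by
        refine setIntegral_congr_fun measurableSet_Ioi fun y (hy : 0 < y) => ?_
        rw [div_add_eq_integral_exp (by positivity), ← integral_const_mul]
        congr 1 with u
        ring
    _ = ∫ u in Ioi (0 : ℝ), ∫ y in Ioi (0 : ℝ),
          c * rexp (-(c * u)) * (y ^ q * rexp (-u * y ^ p)) :=
        (integral_integral_swap (integrable_exp_mul_rpow_mul_exp_neg_mul_rpow hc hq hqp)).symm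
    _ = ∫ u in Ioi (0 : ℝ), c * (1 / p) * Gamma s * (u ^ ((1 - s) - 1) * rexp (-(c * u))) := by
        refine setIntegral_congr_fun measurableSet_Ioi fun u (hu : 0 < u) => ?_
        rw [integral_const_mul, integral_rpow_mul_exp_neg_mul_rpow hp hq hu, sub_sub_cancel_left,
          hs, neg_div]
        ring
    _ = c * (1 / c) ^ (1 - s) * (1 / p) * Gamma s * Gamma (1 - s) := by
        rw [integral_const_mul, integral_rpow_mul_exp_neg_mul_Ioi (by linarith) hc]
        ring
    _ = c ^ s * (1 / p) * Gamma s * Gamma (1 - s) := by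
        rw [one_div, inv_rpow hc.le, ← rpow_neg hc.le,
          ← rpow_one_add' hc.le (by simpa using hs0.ne')]
        ring_nf

end

lemma EuclideanSpace.integral_fun_norm_fin_two {F : Type*} [NormedAddCommGroup F]
    [NormedSpace ℝ F] (f : ℝ → F) :
    ∫ x : EuclideanSpace ℝ (Fin 2), f ‖x‖ = (2 * π) • ∫ y in Ioi (0 : ℝ), y • f y := by
  rw [integral_fun_norm_addHaar, finrank_euclideanSpace_fin, measureReal_def,
    EuclideanSpace.volume_ball_fin_two]
  simp [pi_nonneg, ← Nat.cast_smul_eq_nsmul ℝ, smul_smul]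

/-- The spatial contention constant of a Poisson ALOHA network with Rayleigh fading:
`∫_{ℝ²} θ R^α / (θ R^α + ‖x‖^α) dx = π θ^(2/α) R² Γ(1 - 2/α) Γ(1 + 2/α)`. -/
theorem rayleigh_spatial_contention (α θ R : ℝ) (hα : 2 < α) (hθ : 0 < θ) (hR : 0 < R) :
    ∫ x : EuclideanSpace ℝ (Fin 2), θ * R ^ α / (θ * R ^ α + ‖x‖ ^ α)
      = π * θ ^ (2 / α) * R ^ 2 * Gamma (1 - 2 / α) * Gamma (1 + 2 / α) := by
  have hc : 0 < θ * R ^ α := by positivity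
  have hradial := integral_rpow_mul_div_add_rpow hc (q := 1) (p := α) (by norm_num) (by linarith)
  have hpow : (θ * R ^ α) ^ (2 / α) = θ ^ (2 / α) * R ^ 2 := by
    rw [mul_rpow hθ.le (by positivity), ← rpow_mul hR.le, mul_div_cancel₀ _ (by linarith),
      rpow_two]
  have hGamma : Gamma (1 + 2 / α) = 2 / α * Gamma (2 / α) := by
    rw [add_comm, Gamma_add_one (by positivity)]
  rw [EuclideanSpace.integral_fun_norm_fin_two (fun r => θ * R ^ α / (θ * R ^ α + r ^ α))]
  simp only [smul_eq_mul, rpow_one, one_add_one_eq_two] at hradial ⊢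
  rw [hradial, hpow, hGamma]
  ring
end

section
/- For every real c with 0 < c < 1, the function m ↦ Γ(m − c) Γ(m + c) / Γ(m)² is nonincreasing on the interval (c, ∞), where Γ denotes the Euler gamma function. -/
open Real Set Filter Topology

/- By Euler's limit formula, `Γ(x - c) Γ(x + c) / Γ(x)²` is the infinite product
`∏ⱼ (x + j)² / ((x + j)² - c²)`, and every factor is nonincreasing in `x` on `(|c|, ∞)`. -/

lemma GammaSeq_mul_GammaSeq_div_GammaSeq_sq {a b x : ℝ} (hab : a + b = 2 * x) {n : ℕ}
    (hn : n ≠ 0) :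
    GammaSeq a n * GammaSeq b n / GammaSeq x n ^ 2 =
      ∏ j ∈ Finset.range (n + 1), (x + j) ^ 2 / ((a + j) * (b + j)) := by
  have hn₀ : (0 : ℝ) < n := by positivity
  have hpow : (n : ℝ) ^ a * (n : ℝ) ^ b = ((n : ℝ) ^ x) ^ 2 := by
    rw [← rpow_add hn₀, ← rpow_natCast, ← rpow_mul hn₀.le, hab, mul_comm]; norm_num
  have hK : ((n : ℝ) ^ x * n.factorial) ^ 2 ≠ 0 := by positivity
  rw [Finset.prod_div_distrib, Finset.prod_pow, Finset.prod_mul_distrib]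
  simp only [GammaSeq]
  calc _ = ((n : ℝ) ^ a * (n : ℝ) ^ b) * n.factorial ^ 2 /
          ((∏ j ∈ Finset.range (n + 1), (a + j)) * ∏ j ∈ Finset.range (n + 1), (b + j)) /
          (((n : ℝ) ^ x * n.factorial) ^ 2 / (∏ j ∈ Finset.range (n + 1), (x + j)) ^ 2) := by
        ring
    _ = _ := by rw [hpow, ← mul_pow, div_div_div_cancel_left' _ _ hK]

lemma tendsto_prod_sq_div_mul_Gamma {a b x : ℝ} (hab : a + b = 2 * x) (hx : Gamma x ≠ 0) :
    Tendsto (fun n : ℕ => ∏ j ∈ Finset.range (n + 1), (x + j) ^ 2 / ((a + j) * (b + j)))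
      atTop (𝓝 (Gamma a * Gamma b / Gamma x ^ 2)) := by
  have hlim := ((GammaSeq_tendsto_Gamma a).mul (GammaSeq_tendsto_Gamma b)).div
    ((GammaSeq_tendsto_Gamma x).pow 2) (pow_ne_zero 2 hx)
  refine hlim.congr' ?_
  filter_upwards [eventually_ne_atTop 0] with n hn
  exact GammaSeq_mul_GammaSeq_div_GammaSeq_sq hab hn

lemma antitoneOn_sq_div_sub_mul_add (c : ℝ) :
    AntitoneOn (fun a : ℝ => a ^ 2 / ((a - c) * (a + c))) (Ioi |c|) := by
  intro a ha b hb hab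
  have hca : c ^ 2 < a ^ 2 := sq_lt_sq.mpr (by rwa [abs_of_pos ((abs_nonneg c).trans_lt ha)])
  have hcb : c ^ 2 < b ^ 2 := sq_lt_sq.mpr (by rwa [abs_of_pos ((abs_nonneg c).trans_lt hb)])
  have hsq : a ^ 2 ≤ b ^ 2 := pow_le_pow_left₀ ((abs_nonneg c).trans ha.le) hab 2
  have hdiff (t : ℝ) : (t - c) * (t + c) = t ^ 2 - c ^ 2 := by ring
  simp only [hdiff]
  rw [div_le_div_iff₀ (by linarith) (by linarith)]
  nlinarith [mul_le_mul_of_nonneg_left hsq (sq_nonneg c)]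

theorem gamma_ratio_antitone_general (c : ℝ) (hc0 : 0 < c) :
    AntitoneOn (fun m : ℝ => Gamma (m - c) * Gamma (m + c) / Gamma m ^ 2) (Ioi c) := by
  intro x (hx : c < x) y (hy : c < y) hxy
  have hsum (z : ℝ) : z - c + (z + c) = 2 * z := by ring
  refine le_of_tendsto_of_tendsto
    (tendsto_prod_sq_div_mul_Gamma (hsum y) (Gamma_pos_of_pos (hc0.trans hy)).ne')
    (tendsto_prod_sq_div_mul_Gamma (hsum x) (Gamma_pos_of_pos (hc0.trans hx)).ne')
    (Eventually.of_forall fun n => Finset.prod_le_prod (fun j _ => ?_) (fun j _ => ?_))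
  · have : 0 < y - c + j := by linarith [j.cast_nonneg (α := ℝ)]
    have : 0 < y + c + j := by linarith [j.cast_nonneg (α := ℝ)]
    positivity
  · have hxj : |c| < x + j := by rw [abs_of_pos hc0]; linarith [j.cast_nonneg (α := ℝ)]
    have hyj : |c| < y + j := hxj.trans_le (by linarith)
    have := antitoneOn_sq_div_sub_mul_add c hxj hyj (by linarith)
    simpa only [sub_add_eq_add_sub, add_right_comm] using this

/-- For `0 < c < 1`, the function `m ↦ Γ(m - c) Γ(m + c) / Γ(m)²` is nonincreasing on `(c, ∞)`. -/
theorem gamma_ratio_antitone (c : ℝ) (hc0 : 0 < c) (hc1 : c < 1) :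
    AntitoneOn (fun m : ℝ => Gamma (m - c) * Gamma (m + c) / Gamma m ^ 2) (Ioi c) :=
  gamma_ratio_antitone_general c hc0
end
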